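/- Let A be an n×n nonnegative matrix, D = diag(a₁₁, ..., a_{nn}) with all a_{ii} > 0, and Q = A D^{-1} ⊕ D^{-1} A (entrywise maximum). A positive diagonal scaling X = diag(x) makes B = X^{-1} A X satisfy b_{ii} = max_j b_{ij} = max_j b_{ji} for all i, if and only if Q ⊗ x ≤ x, i.e., x is a Fiedler–Pták scaling vector for Q. -/
import Mathlib


open scoped NNReal

/-- Max-times matrix product. -/
noncomputable def maxMul {n : ℕ} (A B : Matrix (Fin n) (Fin n) ℝ≥0) : Matrix (Fin n) (Fin n) ℝ≥0 :=
  fun i j => Finset.univ.sup fun k => A i k * B k j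

/-- Max-times matrix power. -/
noncomputable def maxPow {n : ℕ} (A : Matrix (Fin n) (Fin n) ℝ≥0) : ℕ → Matrix (Fin n) (Fin n) ℝ≥0
  | 0 => fun i j => if i = j then 1 else 0
  | (k+1) => maxMul (maxPow A k) A

/-- Max-times matrix-vector product. -/
noncomputable def maxVec {n : ℕ} (A : Matrix (Fin n) (Fin n) ℝ≥0) (x : Fin n → ℝ≥0) : Fin n → ℝ≥0 :=
  fun i => Finset.univ.sup fun j => A i j * x j

/-- Weight of the cycle visiting `c 0, c 1, ..., c m, c 0` (indices cyclic in `Fin (m+1)`). -/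
noncomputable def cycleWeight {n m : ℕ} (A : Matrix (Fin n) (Fin n) ℝ≥0) (c : Fin (m+1) → Fin n) : ℝ≥0 :=
  ∏ i : Fin (m+1), A (c i) (c (i + 1))

/-- Kleene star `I ⊕ A ⊕ ... ⊕ A^{n-1}`. -/
noncomputable def kleeneStar {n : ℕ} (A : Matrix (Fin n) (Fin n) ℝ≥0) : Matrix (Fin n) (Fin n) ℝ≥0 :=
  fun i j => (Finset.range n).sup fun k => maxPow A k i j


private lemma bs_aux (a b c d : ℝ≥0) (ha : a ≠ 0) : a⁻¹ * b * c ≤ d ↔ b * c ≤ d * a := by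
  rw [mul_assoc, inv_mul_eq_div, div_le_iff₀ ha.bot_lt]

private lemma bs_self (a b : ℝ≥0) (ha : a ≠ 0) : a⁻¹ * b * a = b := by
  rw [mul_comm, ← mul_assoc, mul_inv_cancel₀ ha, one_mul]

/-- Butkovič–Schneider: the scalings `B = X⁻¹AX` with equal row and column maxima attained
on the diagonal are exactly the Fiedler–Pták scalings of `Q = AD⁻¹ ⊕ D⁻¹A`. -/
theorem equal_row_column_maxima_scaling {n : ℕ} (A : Matrix (Fin n) (Fin n) ℝ≥0)
    (hdiag : ∀ i, 0 < A i i) (x : Fin n → ℝ≥0) (hpos : ∀ i, 0 < x i) :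
    (∀ i, ((x i)⁻¹ * A i i * x i = Finset.univ.sup fun j => (x i)⁻¹ * A i j * x j) ∧
          ((x i)⁻¹ * A i i * x i = Finset.univ.sup fun j => (x j)⁻¹ * A j i * x i)) ↔
      (∀ i, maxVec (fun i j => max (A i j * (A j j)⁻¹) ((A i i)⁻¹ * A i j)) x i ≤ x i) := by
  have hx : ∀ i, x i ≠ 0 := fun i => (hpos i).ne'
  have hA : ∀ i, A i i ≠ 0 := fun i => (hdiag i).ne'
  have key : (∀ i, ((x i)⁻¹ * A i i * x i = Finset.univ.sup fun j => (x i)⁻¹ * A i j * x j) ∧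
          ((x i)⁻¹ * A i i * x i = Finset.univ.sup fun j => (x j)⁻¹ * A j i * x i)) ↔
      ∀ i, (∀ j, A i j * x j ≤ A i i * x i) ∧ (∀ j, A j i * x i ≤ A i i * x j) := by
    apply forall_congr'
    intro i
    rw [bs_self _ _ (hx i)]
    constructor
    · rintro ⟨h1, h2⟩
      constructor
      · intro j
        have : (x i)⁻¹ * A i j * x j ≤ A i i := by
          rw [h1]
          exact Finset.le_sup (f := fun j => (x i)⁻¹ * A i j * x j) (Finset.mem_univ j)
        exact (bs_aux _ _ _ _ (hx i)).mp this
      · intro j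
        have : (x j)⁻¹ * A j i * x i ≤ A i i := by
          rw [h2]
          exact Finset.le_sup (f := fun j => (x j)⁻¹ * A j i * x i) (Finset.mem_univ j)
        exact (bs_aux _ _ _ _ (hx j)).mp this
    · rintro ⟨h1, h2⟩
      constructor
      · refine le_antisymm ?_ (Finset.sup_le fun j _ => (bs_aux _ _ _ _ (hx i)).mpr (h1 j))
        calc A i i = (x i)⁻¹ * A i i * x i := (bs_self _ _ (hx i)).symm
          _ ≤ _ := Finset.le_sup (f := fun j => (x i)⁻¹ * A i j * x j) (Finset.mem_univ i)
      · refine le_antisymm ?_ (Finset.sup_le fun j _ => (bs_aux _ _ _ _ (hx j)).mpr (h2 j))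
        calc A i i = (x i)⁻¹ * A i i * x i := (bs_self _ _ (hx i)).symm
          _ ≤ _ := Finset.le_sup (f := fun j => (x j)⁻¹ * A j i * x i) (Finset.mem_univ i)
  rw [key]
  have key2 : (∀ i, maxVec (fun i j => max (A i j * (A j j)⁻¹) ((A i i)⁻¹ * A i j)) x i ≤ x i) ↔
      ∀ i j, A i j * x j ≤ A j j * x i ∧ A i j * x j ≤ A i i * x i := by
    unfold maxVec
    apply forall_congr'
    intro i
    rw [Finset.sup_le_iff]
    constructor
    · intro h j
      have hj := h j (Finset.mem_univ j)
      rw [max_mul, max_le_iff] at hj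
      obtain ⟨ha1, ha2⟩ := hj
      constructor
      · rw [mul_comm (A i j) (A j j)⁻¹] at ha1
        have := (bs_aux _ _ _ _ (hA j)).mp ha1
        rwa [mul_comm (x i) (A j j)] at this
      · have := (bs_aux _ _ _ _ (hA i)).mp ha2
        rwa [mul_comm (x i) (A i i)] at this
    · intro h j _
      rw [max_mul, max_le_iff]
      obtain ⟨h1, h2⟩ := h j
      constructor
      · rw [mul_comm (A i j) (A j j)⁻¹]
        exact (bs_aux _ _ _ _ (hA j)).mpr (by rwa [mul_comm (A j j) (x i)] at h1)
      · exact (bs_aux _ _ _ _ (hA i)).mpr (by rwa [mul_comm (A i i) (x i)] at h2)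
  rw [key2]
  constructor
  · intro h i j
    exact ⟨(h j).2 i, (h i).1 j⟩
  · intro h i
    exact ⟨fun j => (h i j).2, fun j => (h j i).1⟩
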